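/- arXiv:2010.11712 — 6 statements merged into one kernel-verified Lean document; each statement's English description precedes it below -/
import Mathlib

section
/- Let f : ℝ → ℝ be uniformly continuous on the interval [0,∞) and suppose that the limit as t → ∞ of ∫₀ᵗ f(τ) dτ exists and is finite. Then f(t) → 0 as t → ∞. -/
open Filter

/-- **Barbalat's lemma.** If `f : ℝ → ℝ` is uniformly continuous on `[0, ∞)` and
`∫₀ᵗ f` converges to a finite limit as `t → ∞`, then `f(t) → 0` as `t → ∞`. -/
theorem barbalat (f : ℝ → ℝ)
    (huc : UniformContinuousOn f (Set.Ici 0))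
    (φ : ℝ)
    (hint : Tendsto (fun t => ∫ τ in (0:ℝ)..t, f τ) atTop (nhds φ)) :
    Tendsto f atTop (nhds 0) := by
  have hcont : ContinuousOn f (Set.Ici 0) := huc.continuousOn
  rw [Metric.tendsto_atTop]
  intro ε hε
  obtain ⟨δ, hδ, hδ'⟩ := Metric.uniformContinuousOn_iff.mp huc (ε/2) (by linarith)
  obtain ⟨N, hN⟩ := Metric.tendsto_atTop.mp hint (δ*ε/8) (by positivity)
  refine ⟨max N 0, fun t ht => ?_⟩
  have htN : N ≤ t := le_trans (le_max_left _ _) ht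
  have ht0 : (0:ℝ) ≤ t := le_trans (le_max_right _ _) ht
  rw [Real.dist_eq, sub_zero]
  by_contra h
  push_neg at h
  -- integrability pieces
  have hsub1 : Set.uIcc (0:ℝ) t ⊆ Set.Ici 0 := by
    rw [Set.uIcc_of_le ht0]; exact fun x hx => hx.1
  have hsub2 : Set.uIcc t (t + δ/2) ⊆ Set.Ici 0 := by
    rw [Set.uIcc_of_le (by linarith)]; exact fun x hx => le_trans ht0 hx.1
  have hsub3 : Set.uIcc (0:ℝ) (t + δ/2) ⊆ Set.Ici 0 := by
    rw [Set.uIcc_of_le (by linarith)]; exact fun x hx => hx.1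
  have hi1 : IntervalIntegrable f MeasureTheory.volume 0 t :=
    (hcont.mono hsub1).intervalIntegrable
  have hi2 : IntervalIntegrable f MeasureTheory.volume t (t + δ/2) :=
    (hcont.mono hsub2).intervalIntegrable
  have hsplit : (∫ τ in (0:ℝ)..(t + δ/2), f τ) - (∫ τ in (0:ℝ)..t, f τ)
      = ∫ τ in t..(t + δ/2), f τ := by
    have := intervalIntegral.integral_add_adjacent_intervals hi1 hi2
    linarith
  have h1 := hN t htN
  have h2 := hN (t + δ/2) (by linarith)
  rw [Real.dist_eq] at h1 h2
  have hsmall : |∫ τ in t..(t + δ/2), f τ| < δ*ε/4 := by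
    rw [← hsplit]
    calc |(∫ τ in (0:ℝ)..(t + δ/2), f τ) - (∫ τ in (0:ℝ)..t, f τ)|
        ≤ |(∫ τ in (0:ℝ)..(t + δ/2), f τ) - φ| + |(∫ τ in (0:ℝ)..t, f τ) - φ| := by
          have := abs_sub_le (∫ τ in (0:ℝ)..(t + δ/2), f τ) φ (∫ τ in (0:ℝ)..t, f τ)
          rw [abs_sub_comm φ] at this; exact this
      _ < δ*ε/8 + δ*ε/8 := add_lt_add h2 h1
      _ = δ*ε/4 := by ring
  have habs := abs_lt.mp hsmall
  have hclose : ∀ τ ∈ Set.Icc t (t + δ/2), |f τ - f t| < ε/2 := by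
    intro τ hτ
    have : dist (f τ) (f t) < ε/2 := by
      apply hδ' τ (le_trans ht0 hτ.1) t ht0
      rw [Real.dist_eq, abs_of_nonneg (by linarith [hτ.1])]
      linarith [hτ.2]
    rwa [Real.dist_eq] at this
  rcases le_abs.mp h with hpos | hneg
  · -- ε ≤ f t : integral is at least δ*ε/4
    have hlow : ∀ τ ∈ Set.Icc t (t + δ/2), ε/2 ≤ f τ := by
      intro τ hτ
      have := abs_lt.mp (hclose τ hτ)
      linarith [this.1]
    have hmono : (∫ τ in t..(t + δ/2), (ε/2)) ≤ ∫ τ in t..(t + δ/2), f τ :=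
      intervalIntegral.integral_mono_on (by linarith) intervalIntegrable_const hi2 hlow
    rw [intervalIntegral.integral_const, smul_eq_mul] at hmono
    have : δ*ε/4 ≤ ∫ τ in t..(t + δ/2), f τ := by
      have : (t + δ/2 - t) * (ε/2) = δ*ε/4 := by ring
      linarith [hmono, this]
    linarith [habs.2]
  · -- ε ≤ -f t : integral is at most -δ*ε/4
    have hhigh : ∀ τ ∈ Set.Icc t (t + δ/2), f τ ≤ -(ε/2) := by
      intro τ hτ
      have := abs_lt.mp (hclose τ hτ)
      linarith [this.2]
    have hmono : (∫ τ in t..(t + δ/2), f τ) ≤ ∫ τ in t..(t + δ/2), (-(ε/2)) :=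
      intervalIntegral.integral_mono_on (by linarith) hi2 intervalIntegrable_const hhigh
    rw [intervalIntegral.integral_const, smul_eq_mul] at hmono
    have : (∫ τ in t..(t + δ/2), f τ) ≤ -(δ*ε/4) := by
      have : (t + δ/2 - t) * (-(ε/2)) = -(δ*ε/4) := by ring
      linarith [hmono, this]
    linarith [habs.1]
end

section
/- Let n ≥ 1, let K_I, K_c, R_c ∈ ℝ^{n×n} be positive definite, and let A, Jm : ℝ → ℝ^{n×n} be continuous with Jm(t) skew-symmetric for every t. Suppose q̃, P̃, x_c : ℝ → ℝⁿ are differentiable and satisfy, with z(t) = q̃(t) + x_c(t): q̃′ = A(t) P̃, P̃′ = −A(t)ᵀ K_I z + Jm(t) P̃, x_c′ = −R_c (K_I z + K_c x_c). Then for every t, the function t ↦ H̃_d(q̃(t), P̃(t), x_c(t)) is differentiable with derivative equal to −(K_I z(t) + K_c x_c(t))ᵀ R_c (K_I z(t) + K_c x_c(t)), which is ≤ 0. -/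
open Matrix

private lemma hda_dot {n : ℕ} {f g : ℝ → Fin n → ℝ} {f' g' : Fin n → ℝ} {t : ℝ}
    (hf : HasDerivAt f f' t) (hg : HasDerivAt g g' t) :
    HasDerivAt (fun s => f s ⬝ᵥ g s) (f' ⬝ᵥ g t + f t ⬝ᵥ g') t := by
  have hf' := hasDerivAt_pi.mp hf
  have hg' := hasDerivAt_pi.mp hg
  have : HasDerivAt (fun s => ∑ i, f s i * g s i)
      (∑ i, (f' i * g t i + f t i * g' i)) t :=
    HasDerivAt.fun_sum fun i _ => (hf' i).mul (hg' i)
  simpa [dotProduct, Finset.sum_add_distrib] using this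

private lemma hda_mulVec {n : ℕ} (M : Matrix (Fin n) (Fin n) ℝ)
    {f : ℝ → Fin n → ℝ} {f' : Fin n → ℝ} {t : ℝ} (hf : HasDerivAt f f' t) :
    HasDerivAt (fun s => M.mulVec (f s)) (M.mulVec f') t := by
  rw [hasDerivAt_pi]
  intro i
  have hf' := hasDerivAt_pi.mp hf
  have : HasDerivAt (fun s => ∑ j, M i j * f s j) (∑ j, M i j * f' j) t :=
    HasDerivAt.fun_sum fun j _ => (hf' j).const_mul (M i j)
  simpa [mulVec, dotProduct] using this

private lemma key_dot {n : ℕ} (M : Matrix (Fin n) (Fin n) ℝ) (a b : Fin n → ℝ) :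
    a ⬝ᵥ M.mulVec b = Mᵀ.mulVec a ⬝ᵥ b := by
  rw [Matrix.dotProduct_mulVec, Matrix.mulVec_transpose]

/-- Dissipation identity for the closed-loop error system of Proposition 1:
along solutions of `q̃' = A P̃`, `P̃' = -Aᵀ K_I z + Jm P̃`, `x_c' = -R_c (K_I z + K_c x_c)`
(with `z = q̃ + x_c` and `Jm` skew-symmetric), the Lyapunov function
`H̃_d = ½ zᵀ K_I z + ½ P̃ᵀ P̃ + ½ x_cᵀ K_c x_c` is differentiable with derivative
`-(K_I z + K_c x_c)ᵀ R_c (K_I z + K_c x_c) ≤ 0`. -/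
theorem closed_loop_dissipation (n : ℕ) (hn : 1 ≤ n)
    (KI Kc Rc : Matrix (Fin n) (Fin n) ℝ)
    (hKI : KI.PosDef) (hKc : Kc.PosDef) (hRc : Rc.PosDef)
    (A Jm : ℝ → Matrix (Fin n) (Fin n) ℝ)
    (hA : ∀ i j, Continuous fun t => A t i j)
    (hJm : ∀ i j, Continuous fun t => Jm t i j)
    (hskew : ∀ t, (Jm t)ᵀ = -(Jm t))
    (qt Pt xc : ℝ → Fin n → ℝ)
    (hq : ∀ t, HasDerivAt qt ((A t).mulVec (Pt t)) t)
    (hP : ∀ t, HasDerivAt Pt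
      (-((A t)ᵀ.mulVec (KI.mulVec (qt t + xc t))) + (Jm t).mulVec (Pt t)) t)
    (hx : ∀ t, HasDerivAt xc
      (-(Rc.mulVec (KI.mulVec (qt t + xc t) + Kc.mulVec (xc t)))) t) :
    ∀ t : ℝ,
      HasDerivAt
        (fun s => (1/2) * ((qt s + xc s) ⬝ᵥ KI.mulVec (qt s + xc s))
          + (1/2) * (Pt s ⬝ᵥ Pt s) + (1/2) * (xc s ⬝ᵥ Kc.mulVec (xc s)))
        (-((KI.mulVec (qt t + xc t) + Kc.mulVec (xc t)) ⬝ᵥ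
            Rc.mulVec (KI.mulVec (qt t + xc t) + Kc.mulVec (xc t)))) t ∧
      -((KI.mulVec (qt t + xc t) + Kc.mulVec (xc t)) ⬝ᵥ
          Rc.mulVec (KI.mulVec (qt t + xc t) + Kc.mulVec (xc t))) ≤ 0 := by
  intro t
  constructor
  · have hz : HasDerivAt (fun s => qt s + xc s)
        ((A t).mulVec (Pt t)
          + -(Rc.mulVec (KI.mulVec (qt t + xc t) + Kc.mulVec (xc t)))) t :=
      (hq t).add (hx t)
    have h1 := (hda_dot hz (hda_mulVec KI hz)).const_mul (1/2 : ℝ)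
    have h2 := (hda_dot (hP t) (hP t)).const_mul (1/2 : ℝ)
    have h3 := (hda_dot (hx t) (hda_mulVec Kc (hx t))).const_mul (1/2 : ℝ)
    have htot := (h1.add h2).add h3
    refine htot.congr_deriv ?_
    set z : Fin n → ℝ := qt t + xc t with hzdef
    set x : Fin n → ℝ := xc t with hxdef
    set P : Fin n → ℝ := Pt t with hPdef
    set u : Fin n → ℝ := KI.mulVec z + Kc.mulVec x with hudef
    set w : Fin n → ℝ := (A t).mulVec P with hwdef
    have hKIs : ∀ a b, a ⬝ᵥ KI.mulVec b = b ⬝ᵥ KI.mulVec a := fun a b => by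
      have hs : KIᵀ = KI := by
        have := hKI.1
        rwa [Matrix.IsHermitian, Matrix.conjTranspose_eq_transpose_of_trivial] at this
      rw [key_dot KI a b, hs, dotProduct_comm]
    have hKcs : ∀ a b, a ⬝ᵥ Kc.mulVec b = b ⬝ᵥ Kc.mulVec a := fun a b => by
      have hs : Kcᵀ = Kc := by
        have := hKc.1
        rwa [Matrix.IsHermitian, Matrix.conjTranspose_eq_transpose_of_trivial] at this
      rw [key_dot Kc a b, hs, dotProduct_comm]
    have c5 : (Jm t).mulVec P ⬝ᵥ P = 0 := by
      have h := key_dot (Jm t) P P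
      rw [hskew t, Matrix.neg_mulVec, neg_dotProduct,
        dotProduct_comm] at h
      linarith
    have c6 : P ⬝ᵥ (Jm t).mulVec P = 0 := by
      rw [dotProduct_comm]; exact c5
    have c4 : P ⬝ᵥ (A t)ᵀ.mulVec (KI.mulVec z) = w ⬝ᵥ KI.mulVec z := by
      rw [key_dot ((A t)ᵀ) P (KI.mulVec z), Matrix.transpose_transpose]
    have c3 : (A t)ᵀ.mulVec (KI.mulVec z) ⬝ᵥ P = w ⬝ᵥ KI.mulVec z := by
      rw [dotProduct_comm]; exact c4
    have c1 : z ⬝ᵥ KI.mulVec w = w ⬝ᵥ KI.mulVec z := hKIs z w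
    have c2 : z ⬝ᵥ KI.mulVec (Rc.mulVec u) = Rc.mulVec u ⬝ᵥ KI.mulVec z :=
      hKIs z (Rc.mulVec u)
    have c7 : x ⬝ᵥ Kc.mulVec (Rc.mulVec u) = Rc.mulVec u ⬝ᵥ Kc.mulVec x :=
      hKcs x (Rc.mulVec u)
    have hu : u ⬝ᵥ Rc.mulVec u
        = KI.mulVec z ⬝ᵥ Rc.mulVec u + Kc.mulVec x ⬝ᵥ Rc.mulVec u := by
      nth_rewrite 1 [hudef]
      rw [add_dotProduct]
    have c8 : KI.mulVec z ⬝ᵥ Rc.mulVec u = Rc.mulVec u ⬝ᵥ KI.mulVec z :=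
      dotProduct_comm _ _
    have c9 : Kc.mulVec x ⬝ᵥ Rc.mulVec u = Rc.mulVec u ⬝ᵥ Kc.mulVec x :=
      dotProduct_comm _ _
    rw [hu, c8, c9]
    simp only [add_dotProduct, dotProduct_add, Matrix.mulVec_add,
      Matrix.mulVec_neg, neg_dotProduct, dotProduct_neg]
    rw [c1, c2, c3, c4, c5, c6, c7]
    ring
  · have h := hRc.posSemidef.dotProduct_mulVec_nonneg (KI.mulVec (qt t + xc t) + Kc.mulVec (xc t))
    simp only [star_trivial] at h
    have : (0:ℝ) ≤ (KI.mulVec (qt t + xc t) + Kc.mulVec (xc t)) ⬝ᵥ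
        Rc.mulVec (KI.mulVec (qt t + xc t) + Kc.mulVec (xc t)) := by
      simpa using h
    linarith
end

section
/- Let n ≥ 1, let K_I, K_c, R_c ∈ ℝ^{n×n} be positive definite, and let A, Jm : ℝ → ℝ^{n×n} be continuous with Jm(t) skew-symmetric for every t. Suppose q̃, P̃, x_c : ℝ → ℝⁿ are differentiable on [0,∞) and satisfy, with z(t) = q̃(t) + x_c(t): q̃′ = A(t) P̃, P̃′ = −A(t)ᵀ K_I z + Jm(t) P̃, x_c′ = −R_c (K_I z + K_c x_c). Then q̃, P̃, and x_c are bounded on [0,∞). -/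
open Matrix

lemma dot_hasDeriv {n : ℕ} {u v : ℝ → Fin n → ℝ} {u' v' : Fin n → ℝ} {s : Set ℝ} {t : ℝ}
    (hu : HasDerivWithinAt u u' s t) (hv : HasDerivWithinAt v v' s t) :
    HasDerivWithinAt (fun τ => u τ ⬝ᵥ v τ) (u' ⬝ᵥ v t + u t ⬝ᵥ v') s t := by
  simp only [dotProduct]
  have h : ∀ i ∈ Finset.univ, HasDerivWithinAt (fun τ => u τ i * v τ i)
      (u' i * v t i + u t i * v' i) s t := fun i _ =>
    ((hasDerivWithinAt_pi.mp hu) i).mul ((hasDerivWithinAt_pi.mp hv) i)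
  simpa [Finset.sum_add_distrib] using HasDerivWithinAt.fun_sum h

lemma mulVec_hasDeriv {n : ℕ} (K : Matrix (Fin n) (Fin n) ℝ) {v : ℝ → Fin n → ℝ}
    {v' : Fin n → ℝ} {s : Set ℝ} {t : ℝ} (hv : HasDerivWithinAt v v' s t) :
    HasDerivWithinAt (fun τ => K.mulVec (v τ)) (K.mulVec v') s t := by
  refine hasDerivWithinAt_pi.mpr fun i => ?_
  simp only [mulVec, dotProduct]
  exact HasDerivWithinAt.fun_sum fun j _ => ((hasDerivWithinAt_pi.mp hv) j).const_mul (K i j)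

lemma dot_transpose {n : ℕ} (M : Matrix (Fin n) (Fin n) ℝ) (u v : Fin n → ℝ) :
    u ⬝ᵥ Mᵀ.mulVec v = M.mulVec u ⬝ᵥ v := by
  rw [dotProduct_mulVec, vecMul_transpose, dotProduct_comm, dotProduct_mulVec]

lemma posdef_coercive {n : ℕ} (hn : 1 ≤ n) {K : Matrix (Fin n) (Fin n) ℝ} (hK : K.PosDef) :
    ∃ m > 0, ∀ x : Fin n → ℝ, m * ‖x‖ ^ 2 ≤ x ⬝ᵥ K.mulVec x := by
  have hcont : Continuous fun x : Fin n → ℝ => x ⬝ᵥ K.mulVec x := by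
    simp only [dotProduct, mulVec]
    exact continuous_finset_sum _ fun i _ => (continuous_apply i).mul
      (continuous_finset_sum _ fun j _ => (continuous_const.mul (continuous_apply j)))
  have hcpt : IsCompact (Metric.sphere (0 : Fin n → ℝ) 1) := isCompact_sphere _ _
  have hne : (Metric.sphere (0 : Fin n → ℝ) 1).Nonempty := by
    refine ⟨Pi.single ⟨0, hn⟩ 1, ?_⟩
    simp [mem_sphere_iff_norm, Pi.norm_single]
  obtain ⟨u, hu, hmin⟩ := hcpt.exists_isMinOn hne hcont.continuousOn
  have hu1 : ‖u‖ = 1 := by simpa [mem_sphere_iff_norm] using hu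
  have hu0 : u ≠ 0 := by intro h; rw [h] at hu1; simp at hu1
  refine ⟨u ⬝ᵥ K.mulVec u, ?_, ?_⟩
  · have := hK.dotProduct_mulVec_pos hu0
    simpa using this
  · intro x
    rcases eq_or_ne x 0 with rfl | hx
    · simp
    · have hxn : (0:ℝ) < ‖x‖ := norm_pos_iff.mpr hx
      set v : Fin n → ℝ := ‖x‖⁻¹ • x with hv
      have hvs : v ∈ Metric.sphere (0 : Fin n → ℝ) 1 := by
        simp [mem_sphere_iff_norm, hv, norm_smul, abs_of_pos (inv_pos.mpr hxn),
          inv_mul_cancel₀ hxn.ne']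
      have h1 : u ⬝ᵥ K.mulVec u ≤ v ⬝ᵥ K.mulVec v := hmin hvs
      have h2 : v ⬝ᵥ K.mulVec v = ‖x‖⁻¹ ^ 2 * (x ⬝ᵥ K.mulVec x) := by
        simp [hv, mulVec_smul, smul_dotProduct, dotProduct_smul, smul_eq_mul]
        ring
      rw [h2] at h1
      have := mul_le_mul_of_nonneg_left h1 (by positivity : (0:ℝ) ≤ ‖x‖ ^ 2)
      calc u ⬝ᵥ K.mulVec u * ‖x‖ ^ 2 = ‖x‖ ^ 2 * (u ⬝ᵥ K.mulVec u) := by ring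
        _ ≤ ‖x‖ ^ 2 * (‖x‖⁻¹ ^ 2 * (x ⬝ᵥ K.mulVec x)) := this
        _ = x ⬝ᵥ K.mulVec x := by field_simp

/-- Boundedness step in the proof of Proposition 1: solutions of the closed-loop
error system `q̃' = A P̃`, `P̃' = -Aᵀ K_I z + Jm P̃`, `x_c' = -R_c (K_I z + K_c x_c)`
(with `z = q̃ + x_c`, `Jm` skew-symmetric) are bounded on `[0, ∞)`. -/
theorem closed_loop_bounded (n : ℕ) (hn : 1 ≤ n)
    (KI Kc Rc : Matrix (Fin n) (Fin n) ℝ)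
    (hKI : KI.PosDef) (hKc : Kc.PosDef) (hRc : Rc.PosDef)
    (A Jm : ℝ → Matrix (Fin n) (Fin n) ℝ)
    (hA : ∀ i j, Continuous fun t => A t i j)
    (hJm : ∀ i j, Continuous fun t => Jm t i j)
    (hskew : ∀ t, (Jm t)ᵀ = -(Jm t))
    (qt Pt xc : ℝ → Fin n → ℝ)
    (hq : ∀ t ∈ Set.Ici (0:ℝ),
      HasDerivWithinAt qt ((A t).mulVec (Pt t)) (Set.Ici 0) t)
    (hP : ∀ t ∈ Set.Ici (0:ℝ), HasDerivWithinAt Pt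
      (-((A t)ᵀ.mulVec (KI.mulVec (qt t + xc t))) + (Jm t).mulVec (Pt t))
      (Set.Ici 0) t)
    (hx : ∀ t ∈ Set.Ici (0:ℝ), HasDerivWithinAt xc
      (-(Rc.mulVec (KI.mulVec (qt t + xc t) + Kc.mulVec (xc t)))) (Set.Ici 0) t) :
    ∃ C : ℝ, ∀ t ∈ Set.Ici (0:ℝ), ‖qt t‖ ≤ C ∧ ‖Pt t‖ ≤ C ∧ ‖xc t‖ ≤ C := by
  -- symmetry of KI and Kc
  have hKIt : KIᵀ = KI := by
    have := hKI.isHermitian; rwa [Matrix.IsHermitian,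
      conjTranspose_eq_transpose_of_trivial] at this
  have hKct : Kcᵀ = Kc := by
    have := hKc.isHermitian; rwa [Matrix.IsHermitian,
      conjTranspose_eq_transpose_of_trivial] at this
  -- abbreviations
  let z : ℝ → Fin n → ℝ := fun t => qt t + xc t
  let w : ℝ → Fin n → ℝ := fun t => KI.mulVec (z t) + Kc.mulVec (xc t)
  let z' : ℝ → Fin n → ℝ := fun t => (A t).mulVec (Pt t) + -(Rc.mulVec (w t))
  let P' : ℝ → Fin n → ℝ := fun t =>
    -((A t)ᵀ.mulVec (KI.mulVec (z t))) + (Jm t).mulVec (Pt t)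
  let x' : ℝ → Fin n → ℝ := fun t => -(Rc.mulVec (w t))
  let H : ℝ → ℝ := fun t =>
    z t ⬝ᵥ KI.mulVec (z t) + Pt t ⬝ᵥ Pt t + xc t ⬝ᵥ Kc.mulVec (xc t)
  let E : ℝ → ℝ := fun t =>
    (z' t ⬝ᵥ KI.mulVec (z t) + z t ⬝ᵥ KI.mulVec (z' t))
      + (P' t ⬝ᵥ Pt t + Pt t ⬝ᵥ P' t)
      + (x' t ⬝ᵥ Kc.mulVec (xc t) + xc t ⬝ᵥ Kc.mulVec (x' t))
  -- derivative of H
  have hH' : ∀ t ∈ Set.Ici (0:ℝ), HasDerivWithinAt H (E t) (Set.Ici 0) t := by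
    intro t ht
    have hzd : HasDerivWithinAt z (z' t) (Set.Ici 0) t := (hq t ht).add (hx t ht)
    have hxd : HasDerivWithinAt xc (x' t) (Set.Ici 0) t := hx t ht
    have hPd : HasDerivWithinAt Pt (P' t) (Set.Ici 0) t := hP t ht
    exact ((dot_hasDeriv hzd (mulVec_hasDeriv KI hzd)).add
      (dot_hasDeriv hPd hPd)).add (dot_hasDeriv hxd (mulVec_hasDeriv Kc hxd))
  -- the derivative is nonpositive
  have hE : ∀ t, E t = -2 * (Rc.mulVec (w t) ⬝ᵥ w t) := by
    intro t
    have hs1 : ∀ u v : Fin n → ℝ, u ⬝ᵥ KI.mulVec v = KI.mulVec u ⬝ᵥ v := by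
      intro u v; rw [← hKIt, dot_transpose, hKIt]
    have hs2 : ∀ u v : Fin n → ℝ, u ⬝ᵥ Kc.mulVec v = Kc.mulVec u ⬝ᵥ v := by
      intro u v; rw [← hKct, dot_transpose, hKct]
    have hskew0 : Pt t ⬝ᵥ (Jm t).mulVec (Pt t) = 0 := by
      have h1 : Pt t ⬝ᵥ (Jm t)ᵀ.mulVec (Pt t) = (Jm t).mulVec (Pt t) ⬝ᵥ Pt t :=
        dot_transpose _ _ _
      rw [hskew t, Matrix.neg_mulVec, dotProduct_neg, dotProduct_comm] at h1
      rw [dotProduct_comm]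
      linarith
    have hs4 : Pt t ⬝ᵥ (A t)ᵀ.mulVec (KI.mulVec (z t))
        = (A t).mulVec (Pt t) ⬝ᵥ KI.mulVec (z t) := dot_transpose _ _ _
    have e1 : z t ⬝ᵥ KI *ᵥ A t *ᵥ Pt t = A t *ᵥ Pt t ⬝ᵥ KI *ᵥ z t := by
      rw [hs1, dotProduct_comm]
    have e2 : z t ⬝ᵥ KI *ᵥ Rc *ᵥ Kc *ᵥ xc t = Rc *ᵥ Kc *ᵥ xc t ⬝ᵥ KI *ᵥ z t := by
      rw [hs1, dotProduct_comm]
    have e3 : z t ⬝ᵥ KI *ᵥ Rc *ᵥ KI *ᵥ z t = Rc *ᵥ KI *ᵥ z t ⬝ᵥ KI *ᵥ z t := by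
      rw [hs1, dotProduct_comm]
    have e4 : (A t)ᵀ *ᵥ KI *ᵥ z t ⬝ᵥ Pt t = A t *ᵥ Pt t ⬝ᵥ KI *ᵥ z t := by
      rw [dotProduct_comm]; exact hs4
    have e5 : Jm t *ᵥ Pt t ⬝ᵥ Pt t = 0 := by rw [dotProduct_comm]; exact hskew0
    have e6 : xc t ⬝ᵥ Kc *ᵥ Rc *ᵥ Kc *ᵥ xc t = Rc *ᵥ Kc *ᵥ xc t ⬝ᵥ Kc *ᵥ xc t := by
      rw [hs2, dotProduct_comm]
    have e7 : xc t ⬝ᵥ Kc *ᵥ Rc *ᵥ KI *ᵥ z t = Rc *ᵥ KI *ᵥ z t ⬝ᵥ Kc *ᵥ xc t := by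
      rw [hs2, dotProduct_comm]
    simp only [E, z', P', x', w]
    simp only [Matrix.mulVec_add, Matrix.mulVec_neg, add_dotProduct, dotProduct_add,
      neg_dotProduct, dotProduct_neg, neg_add_rev, neg_neg]
    rw [e1, e2, e3, e4, e5, e6, e7, hs4, hskew0]
    ring
  have hEnonpos : ∀ t, E t ≤ 0 := by
    intro t
    rw [hE t]
    have h1 : Rc.mulVec (w t) ⬝ᵥ w t = w t ⬝ᵥ Rcᵀ.mulVec (w t) := (dot_transpose _ _ _).symm
    have h2 : (0:ℝ) ≤ w t ⬝ᵥ Rcᵀ.mulVec (w t) := by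
      have := (hRc.transpose).posSemidef.dotProduct_mulVec_nonneg (w t)
      simpa using this
    nlinarith
  -- H is antitone on [0, ∞)
  have hanti : AntitoneOn H (Set.Ici (0:ℝ)) := by
    refine antitoneOn_of_deriv_nonpos (convex_Ici 0)
      (fun t ht => (hH' t ht).continuousWithinAt) ?_ ?_
    · intro t ht
      rw [interior_Ici] at ht
      exact ((hH' t (Set.Ioi_subset_Ici_self ht)).hasDerivAt
        (Ici_mem_nhds ht)).differentiableAt.differentiableWithinAt
    · intro t ht
      rw [interior_Ici] at ht
      rw [((hH' t (Set.Ioi_subset_Ici_self ht)).hasDerivAt (Ici_mem_nhds ht)).deriv]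
      exact hEnonpos t
  -- coercivity constants
  obtain ⟨mI, hmI, hbI⟩ := posdef_coercive hn hKI
  obtain ⟨mc, hmc, hbc⟩ := posdef_coercive hn hKc
  obtain ⟨m1, hm1, hb1⟩ := posdef_coercive hn (Matrix.PosDef.one (n := Fin n) (R := ℝ))
  have hb1' : ∀ x : Fin n → ℝ, m1 * ‖x‖ ^ 2 ≤ x ⬝ᵥ x := by
    intro x; have := hb1 x; rwa [Matrix.one_mulVec] at this
  set c : ℝ := H 0 with hc
  -- each quadratic term is nonnegative
  have hnonnegI : ∀ t, (0:ℝ) ≤ z t ⬝ᵥ KI.mulVec (z t) := fun t =>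
    le_trans (by positivity) (hbI (z t))
  have hnonnegc : ∀ t, (0:ℝ) ≤ xc t ⬝ᵥ Kc.mulVec (xc t) := fun t =>
    le_trans (by positivity) (hbc (xc t))
  have hnonnegP : ∀ t, (0:ℝ) ≤ Pt t ⬝ᵥ Pt t := fun t =>
    le_trans (by positivity) (hb1' (Pt t))
  have hHle : ∀ t ∈ Set.Ici (0:ℝ), H t ≤ c :=
    fun t ht => hanti Set.self_mem_Ici ht ht
  have hbound : ∀ (m : ℝ), 0 < m → ∀ (v : Fin n → ℝ), m * ‖v‖ ^ 2 ≤ c →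
      ‖v‖ ≤ Real.sqrt (c / m) := by
    intro m hm v hv
    have h1 : ‖v‖ ^ 2 ≤ c / m := by
      rw [le_div_iff₀ hm]; linarith
    calc ‖v‖ = Real.sqrt (‖v‖ ^ 2) := by rw [Real.sqrt_sq (norm_nonneg v)]
      _ ≤ Real.sqrt (c / m) := Real.sqrt_le_sqrt h1
  refine ⟨Real.sqrt (c / mI) + Real.sqrt (c / mc) + Real.sqrt (c / m1), fun t ht => ?_⟩
  have hzb : ‖z t‖ ≤ Real.sqrt (c / mI) := by
    refine hbound mI hmI (z t) ?_
    calc mI * ‖z t‖ ^ 2 ≤ z t ⬝ᵥ KI.mulVec (z t) := hbI (z t)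
      _ ≤ H t := by have := hnonnegc t; have := hnonnegP t; simp only [H]; linarith
      _ ≤ c := hHle t ht
  have hxb : ‖xc t‖ ≤ Real.sqrt (c / mc) := by
    refine hbound mc hmc (xc t) ?_
    calc mc * ‖xc t‖ ^ 2 ≤ xc t ⬝ᵥ Kc.mulVec (xc t) := hbc (xc t)
      _ ≤ H t := by have := hnonnegI t; have := hnonnegP t; simp only [H]; linarith
      _ ≤ c := hHle t ht
  have hPb : ‖Pt t‖ ≤ Real.sqrt (c / m1) := by
    refine hbound m1 hm1 (Pt t) ?_
    calc m1 * ‖Pt t‖ ^ 2 ≤ Pt t ⬝ᵥ Pt t := hb1' (Pt t)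
      _ ≤ H t := by have := hnonnegI t; have := hnonnegc t; simp only [H]; linarith
      _ ≤ c := hHle t ht
  have hqb : ‖qt t‖ ≤ Real.sqrt (c / mI) + Real.sqrt (c / mc) := by
    have hq0 : qt t = z t - xc t := by simp [z]
    rw [hq0]
    exact (norm_sub_le _ _).trans (add_le_add hzb hxb)
  have hs1 : (0:ℝ) ≤ Real.sqrt (c / mI) := Real.sqrt_nonneg _
  have hs2 : (0:ℝ) ≤ Real.sqrt (c / mc) := Real.sqrt_nonneg _
  have hs3 : (0:ℝ) ≤ Real.sqrt (c / m1) := Real.sqrt_nonneg _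
  exact ⟨by linarith, by linarith, by linarith⟩
end

section
/- Let n ≥ 1, let α_i > 0, β_i > 0 for i = 1,…,n, and let K_c ∈ ℝ^{n×n} be positive definite. Define H̃_sat(q̃, P̃, x_c) = Σ_{i=1}^n (α_i/β_i) ln(cosh(β_i (q̃_i + x_{c,i}))) + ½ P̃ᵀP̃ + ½ x_cᵀ K_c x_c for (q̃, P̃, x_c) ∈ ℝⁿ × ℝⁿ × ℝⁿ. Then H̃_sat(0,0,0) = 0, H̃_sat(q̃, P̃, x_c) > 0 for every (q̃, P̃, x_c) ≠ (0,0,0), and H̃_sat is radially unbounded: H̃_sat(q̃, P̃, x_c) → ∞ as ‖(q̃, P̃, x_c)‖ → ∞ (equivalently, every sublevel set {H̃_sat ≤ c} is bounded). -/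
open Matrix

private lemma logcosh_ge (x : ℝ) : |x| - Real.log 2 ≤ Real.log (Real.cosh x) := by
  have h1 : Real.exp |x| ≤ 2 * Real.cosh x := by
    rw [Real.cosh_eq]
    rcases abs_cases x with ⟨h, _⟩ | ⟨h, _⟩ <;> rw [h] <;>
      nlinarith [Real.exp_pos x, Real.exp_pos (-x)]
  have h2 : Real.log (Real.exp |x|) ≤ Real.log (2 * Real.cosh x) :=
    Real.log_le_log (Real.exp_pos _) h1
  rw [Real.log_exp, Real.log_mul two_ne_zero (Real.cosh_pos x).ne'] at h2
  linarith

private lemma normsq_le_dot {n : ℕ} (v : Fin n → ℝ) : ‖v‖ ^ 2 ≤ v ⬝ᵥ v := by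
  have h0 : 0 ≤ v ⬝ᵥ v := Finset.sum_nonneg fun i _ => mul_self_nonneg _
  have h1 : ‖v‖ ≤ Real.sqrt (v ⬝ᵥ v) := by
    refine (pi_norm_le_iff_of_nonneg (Real.sqrt_nonneg _)).2 fun i => ?_
    rw [Real.norm_eq_abs, ← Real.sqrt_sq_eq_abs]
    refine Real.sqrt_le_sqrt ?_
    calc v i ^ 2 = v i * v i := by ring
      _ ≤ ∑ j, v j * v j := Finset.single_le_sum (fun j _ => mul_self_nonneg (v j))
          (Finset.mem_univ i)
      _ = v ⬝ᵥ v := rfl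
  calc ‖v‖ ^ 2 ≤ Real.sqrt (v ⬝ᵥ v) ^ 2 := pow_le_pow_left₀ (norm_nonneg v) h1 2
    _ = v ⬝ᵥ v := Real.sq_sqrt h0

private lemma posdef_lb {n : ℕ} (hn : 1 ≤ n) (A : Matrix (Fin n) (Fin n) ℝ) (hA : A.PosDef) :
    ∃ lam : ℝ, 0 < lam ∧ ∀ x : Fin n → ℝ, lam * (x ⬝ᵥ x) ≤ x ⬝ᵥ A.mulVec x := by
  have hcont : Continuous fun x : EuclideanSpace ℝ (Fin n) => x ⬝ᵥ A.mulVec x := by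
    have h : Continuous fun y : Fin n → ℝ => y ⬝ᵥ A.mulVec y := by
      simp only [dotProduct, Matrix.mulVec]; fun_prop
    exact h.comp (EuclideanSpace.equiv (Fin n) ℝ).continuous
  have hsph : (Metric.sphere (0 : EuclideanSpace ℝ (Fin n)) 1).Nonempty := by
    refine ⟨EuclideanSpace.single ⟨0, hn⟩ (1:ℝ), ?_⟩
    simp [EuclideanSpace.norm_single]
  obtain ⟨x₀, hx₀, hmin⟩ := (isCompact_sphere (0 : EuclideanSpace ℝ (Fin n)) 1).exists_isMinOn
    hsph hcont.continuousOn
  have hx₀n : ‖x₀‖ = 1 := by simpa using hx₀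
  have hx₀ne : (x₀ : Fin n → ℝ) ≠ 0 := by
    intro h
    have : x₀ = (0 : EuclideanSpace ℝ (Fin n)) := by ext i; simpa using congrFun h i
    rw [this] at hx₀n; simp at hx₀n
  have hlam : 0 < x₀ ⬝ᵥ A.mulVec x₀ := by simpa using hA.dotProduct_mulVec_pos hx₀ne
  refine ⟨_, hlam, fun x => ?_⟩
  rcases eq_or_ne x 0 with rfl | hx
  · simp
  · set x' : EuclideanSpace ℝ (Fin n) := WithLp.toLp 2 x with hx'
    have hx'ne : x' ≠ 0 := fun h => hx (by have := congrArg WithLp.ofLp h; simpa [hx'] using this)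
    have hr : 0 < ‖x'‖ := norm_pos_iff.2 hx'ne
    set y : EuclideanSpace ℝ (Fin n) := ‖x'‖⁻¹ • x' with hy
    have hyS : y ∈ Metric.sphere (0 : EuclideanSpace ℝ (Fin n)) 1 := by
      simp [hy, norm_smul, abs_of_pos (inv_pos.2 hr), inv_mul_cancel₀ hr.ne']
    have hval : (y : Fin n → ℝ) ⬝ᵥ A.mulVec y = ‖x'‖⁻¹ * ‖x'‖⁻¹ * (x ⬝ᵥ A.mulVec x) := by
      show (‖x'‖⁻¹ • x) ⬝ᵥ A.mulVec (‖x'‖⁻¹ • x) = _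
      rw [Matrix.mulVec_smul, smul_dotProduct, dotProduct_smul]
      simp [smul_smul, mul_assoc]
    have hxx : x ⬝ᵥ x = ‖x'‖ ^ 2 := by
      have := EuclideanSpace.norm_eq x'
      rw [this]
      rw [Real.sq_sqrt (by positivity)]
      simp [hx', dotProduct, sq, Real.norm_eq_abs, abs_mul_abs_self]
    have h1 : x₀ ⬝ᵥ A.mulVec x₀ ≤ y ⬝ᵥ A.mulVec y := hmin hyS
    rw [hval] at h1
    rw [hxx]
    have h2 : (x₀ ⬝ᵥ A.mulVec x₀) * ‖x'‖^2 ≤ x ⬝ᵥ A.mulVec x := by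
      have hne := hr.ne'
      have h4 : (x₀ ⬝ᵥ A.mulVec x₀) * (‖x'‖ * ‖x'‖) ≤
          (‖x'‖⁻¹ * ‖x'‖⁻¹ * (x ⬝ᵥ A.mulVec x)) * (‖x'‖ * ‖x'‖) :=
        mul_le_mul_of_nonneg_right h1 (by positivity)
      calc (x₀ ⬝ᵥ A.mulVec x₀) * ‖x'‖ ^ 2
          = (x₀ ⬝ᵥ A.mulVec x₀) * (‖x'‖ * ‖x'‖) := by ring
        _ ≤ (‖x'‖⁻¹ * ‖x'‖⁻¹ * (x ⬝ᵥ A.mulVec x)) * (‖x'‖ * ‖x'‖) := h4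
        _ = x ⬝ᵥ A.mulVec x := by field_simp
    linarith

private lemma final_arith {a lam C c t p s N : ℝ} (ha : 0 < a) (hlam : 0 < lam)
    (ht0 : 0 ≤ t) (hp0 : 0 ≤ p) (hs0 : 0 ≤ s) (hN0 : 0 ≤ N)
    (htN : t ≤ N) (hpN : p ≤ N) (hsN : s ≤ N)
    (hc1 : c ≤ a / 2 * N - C) (hc2 : c ≤ lam / 8 * N ^ 2 - a * N - C)
    (hc3 : c ≤ 1 / 2 * N ^ 2 - a * N - C)
    (hmax : N ≤ t ∨ N ≤ p ∨ N ≤ s) :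
    c ≤ a * (t - s) - C + (1/2) * p ^ 2 + (1/2) * (lam * s ^ 2) := by
  rcases hmax with hN | hN | hN
  · rcases le_total s (N / 2) with hs2 | hs2
    · nlinarith [mul_nonneg ha.le (show (0:ℝ) ≤ t - s - N/2 by linarith),
        mul_nonneg hlam.le (sq_nonneg s), sq_nonneg p]
    · nlinarith [mul_nonneg ha.le (show (0:ℝ) ≤ t - s + N by linarith),
        mul_nonneg hlam.le (mul_nonneg (show (0:ℝ) ≤ s - N/2 by linarith)
          (show (0:ℝ) ≤ s + N/2 by linarith)), sq_nonneg p]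
  · nlinarith [mul_nonneg ha.le (show (0:ℝ) ≤ t - s + N by linarith),
      mul_nonneg hlam.le (sq_nonneg s), pow_le_pow_left₀ hN0 hN 2]
  · nlinarith [mul_nonneg ha.le (show (0:ℝ) ≤ t - s + N by linarith),
      mul_nonneg hlam.le (mul_nonneg (show (0:ℝ) ≤ s - N by linarith)
        (show (0:ℝ) ≤ s + N by linarith)),
      mul_nonneg hlam.le (sq_nonneg N), sq_nonneg p]

/-- The saturated Lyapunov function
`H̃_sat(q̃, P̃, x_c) = Σᵢ (αᵢ/βᵢ) ln(cosh(βᵢ (q̃ᵢ + x_cᵢ))) + ½ P̃ᵀ P̃ + ½ x_cᵀ K_c x_c`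
vanishes at the origin, is positive elsewhere, and is radially unbounded. -/
theorem lyapunov_Hsat_posdef_radially_unbounded (n : ℕ) (hn : 1 ≤ n)
    (α β : Fin n → ℝ) (hα : ∀ i, 0 < α i) (hβ : ∀ i, 0 < β i)
    (Kc : Matrix (Fin n) (Fin n) ℝ) (hKc : Kc.PosDef) :
    let H : (Fin n → ℝ) → (Fin n → ℝ) → (Fin n → ℝ) → ℝ := fun qt Pt xc =>
      (∑ i, (α i / β i) * Real.log (Real.cosh (β i * (qt i + xc i))))
        + (1/2) * (Pt ⬝ᵥ Pt) + (1/2) * (xc ⬝ᵥ Kc.mulVec xc)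
    (H 0 0 0 = 0) ∧
    (∀ qt Pt xc : Fin n → ℝ, (qt, Pt, xc) ≠ (0, 0, 0) → 0 < H qt Pt xc) ∧
    (∀ c : ℝ, ∃ R : ℝ, ∀ v : (Fin n → ℝ) × (Fin n → ℝ) × (Fin n → ℝ),
      R ≤ ‖v‖ → c ≤ H v.1 v.2.1 v.2.2) := by
  intro H
  obtain ⟨lam, hlam, hlb⟩ := posdef_lb hn Kc hKc
  have hlc0 : ∀ x : ℝ, 0 ≤ Real.log (Real.cosh x) :=
    fun x => Real.log_nonneg (Real.one_le_cosh x)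
  have hdotself : ∀ v : Fin n → ℝ, 0 ≤ v ⬝ᵥ v :=
    fun v => Finset.sum_nonneg fun i _ => mul_self_nonneg _
  have hXnn : ∀ v : Fin n → ℝ, 0 ≤ v ⬝ᵥ Kc.mulVec v := fun v => by
    calc (0:ℝ) ≤ lam * (v ⬝ᵥ v) := mul_nonneg hlam.le (hdotself v)
      _ ≤ v ⬝ᵥ Kc.mulVec v := hlb v
  have hSnn : ∀ qt xc : Fin n → ℝ,
      0 ≤ ∑ i, (α i / β i) * Real.log (Real.cosh (β i * (qt i + xc i))) :=
    fun qt xc => Finset.sum_nonneg fun i _ =>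
      mul_nonneg (div_nonneg (hα i).le (hβ i).le) (hlc0 _)
  refine ⟨?_, ?_, ?_⟩
  · show (∑ i, (α i / β i) * Real.log (Real.cosh (β i * ((0:Fin n → ℝ) i + (0:Fin n → ℝ) i))))
      + (1/2) * ((0:Fin n → ℝ) ⬝ᵥ (0:Fin n → ℝ))
      + (1/2) * ((0:Fin n → ℝ) ⬝ᵥ Kc.mulVec (0:Fin n → ℝ)) = 0
    simp
  · intro qt Pt xc hne
    show 0 < (∑ i, (α i / β i) * Real.log (Real.cosh (β i * (qt i + xc i))))
      + (1/2) * (Pt ⬝ᵥ Pt) + (1/2) * (xc ⬝ᵥ Kc.mulVec xc)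
    have hS := hSnn qt xc
    have hP := hdotself Pt
    have hX := hXnn xc
    by_cases hxc : xc = 0
    · by_cases hPt : Pt = 0
      · have hqt : qt ≠ 0 := by
          intro h; exact hne (by rw [h, hxc, hPt])
        obtain ⟨i, hi⟩ := Function.ne_iff.1 hqt
        have hpos : 0 < (α i / β i) * Real.log (Real.cosh (β i * (qt i + xc i))) := by
          have harg : β i * (qt i + xc i) ≠ 0 := by
            rw [hxc]; simpa using mul_ne_zero (hβ i).ne' hi
          exact mul_pos (div_pos (hα i) (hβ i))
            (Real.log_pos (Real.one_lt_cosh.2 harg))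
        have : 0 < ∑ i, (α i / β i) * Real.log (Real.cosh (β i * (qt i + xc i))) :=
          Finset.sum_pos' (fun j _ => mul_nonneg (div_nonneg (hα j).le (hβ j).le) (hlc0 _))
            ⟨i, Finset.mem_univ i, hpos⟩
        linarith
      · have : 0 < Pt ⬝ᵥ Pt :=
          lt_of_le_of_ne hP (fun h => hPt ((dotProduct_self_eq_zero).1 h.symm))
        linarith
    · have : 0 < xc ⬝ᵥ Kc.mulVec xc := by simpa using hKc.dotProduct_mulVec_pos hxc
      linarith
  · intro c
    haveI : Nonempty (Fin n) := ⟨⟨0, hn⟩⟩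
    set a : ℝ := Finset.univ.inf' Finset.univ_nonempty α with ha_def
    have ha : 0 < a := (Finset.lt_inf'_iff _).2 fun i _ => hα i
    have hai : ∀ i, a ≤ α i := fun i => Finset.inf'_le α (Finset.mem_univ i)
    set C : ℝ := ∑ i, (α i / β i) * Real.log 2 with hC_def
    have hC : 0 ≤ C := Finset.sum_nonneg fun i _ =>
      mul_nonneg (div_nonneg (hα i).le (hβ i).le) (Real.log_nonneg one_le_two)
    have key : ∀ k : ℝ, 0 < k →
        Filter.Tendsto (fun N : ℝ => k * N ^ 2 - a * N - C) Filter.atTop Filter.atTop := by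
      intro k hk
      have h' : Filter.Tendsto (fun N : ℝ => N * (k * N + -a) + -C) Filter.atTop Filter.atTop := by
        apply Filter.tendsto_atTop_add_const_right
        exact Filter.Tendsto.atTop_mul_atTop₀ Filter.tendsto_id
          (Filter.tendsto_atTop_add_const_right _ (-a)
            (Filter.Tendsto.const_mul_atTop hk Filter.tendsto_id))
      exact h'.congr fun N => by ring
    have h1 : ∀ᶠ N in Filter.atTop, c ≤ a / 2 * N - C := by
      have : Filter.Tendsto (fun N : ℝ => a / 2 * N + -C) Filter.atTop Filter.atTop :=
        Filter.tendsto_atTop_add_const_right _ (-C)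
          (Filter.Tendsto.const_mul_atTop (by positivity) Filter.tendsto_id)
      exact (this.congr fun N => by ring).eventually_ge_atTop c
    have h2 := (key (lam / 8) (by positivity)).eventually_ge_atTop c
    have h3 := (key (1 / 2) (by norm_num)).eventually_ge_atTop c
    obtain ⟨R, hR⟩ := Filter.eventually_atTop.1
      (((h1.and h2).and h3).and (Filter.eventually_ge_atTop 0))
    refine ⟨R, fun v hv => ?_⟩
    obtain ⟨⟨⟨hc1, hc2⟩, hc3⟩, hN0⟩ := hR ‖v‖ hv
    set qt := v.1 with hqt_def
    set Pt := v.2.1 with hPt_def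
    set xc := v.2.2 with hxc_def
    set N : ℝ := ‖v‖ with hN_def
    show c ≤ (∑ i, (α i / β i) * Real.log (Real.cosh (β i * (qt i + xc i))))
      + (1/2) * (Pt ⬝ᵥ Pt) + (1/2) * (xc ⬝ᵥ Kc.mulVec xc)
    set t := ‖qt‖ with ht_def
    set p := ‖Pt‖ with hp_def
    set s := ‖xc‖ with hs_def
    have ht0 : 0 ≤ t := norm_nonneg _
    have hp0 : 0 ≤ p := norm_nonneg _
    have hs0 : 0 ≤ s := norm_nonneg _
    have htN : t ≤ N := (norm_fst_le v)
    have hpN : p ≤ N := le_trans (norm_fst_le v.2) (norm_snd_le v)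
    have hsN : s ≤ N := le_trans (norm_snd_le v.2) (norm_snd_le v)
    have hmax : N ≤ t ∨ N ≤ p ∨ N ≤ s := by
      have h : N = max t (max p s) := by
        rw [hN_def, Prod.norm_def, Prod.norm_def]
      rcases max_cases t (max p s) with ⟨he, _⟩ | ⟨he, _⟩
      · left; rw [h, he]
      · rcases max_cases p s with ⟨he2, _⟩ | ⟨he2, _⟩
        · right; left; rw [h, he, he2]
        · right; right; rw [h, he, he2]
    -- Lower bound on the sum term
    have hterm : ∀ i, α i * |qt i + xc i| - (α i / β i) * Real.log 2 ≤
        (α i / β i) * Real.log (Real.cosh (β i * (qt i + xc i))) := by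
      intro i
      have h := logcosh_ge (β i * (qt i + xc i))
      have habs : |β i * (qt i + xc i)| = β i * |qt i + xc i| := by
        rw [abs_mul, abs_of_pos (hβ i)]
      rw [habs] at h
      have := mul_le_mul_of_nonneg_left h (div_nonneg (hα i).le (hβ i).le)
      calc α i * |qt i + xc i| - (α i / β i) * Real.log 2
          = (α i / β i) * (β i * |qt i + xc i| - Real.log 2) := by
            rw [mul_sub]
            congr 1
            rw [div_mul_eq_mul_div, mul_comm (β i) _, ← mul_assoc, mul_div_assoc,
              div_self (hβ i).ne', mul_one]
        _ ≤ (α i / β i) * Real.log (Real.cosh (β i * (qt i + xc i))) := this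
    have hsum1 : (∑ i, α i * |qt i + xc i|) - C ≤
        ∑ i, (α i / β i) * Real.log (Real.cosh (β i * (qt i + xc i))) := by
      rw [hC_def, ← Finset.sum_sub_distrib]
      exact Finset.sum_le_sum fun i _ => hterm i
    set T : ℝ := ∑ i, α i * |qt i + xc i| with hT_def
    have hT0 : 0 ≤ T := Finset.sum_nonneg fun i _ => mul_nonneg (hα i).le (abs_nonneg _)
    have hTa : a * ‖qt + xc‖ ≤ T := by
      have hnorm : ‖qt + xc‖ ≤ T / a := by
        refine (pi_norm_le_iff_of_nonneg (div_nonneg hT0 ha.le)).2 fun i => ?_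
        rw [le_div_iff₀ ha]
        calc ‖(qt + xc) i‖ * a = a * |qt i + xc i| := by
              rw [Real.norm_eq_abs]; simp [mul_comm]
          _ ≤ α i * |qt i + xc i| := mul_le_mul_of_nonneg_right (hai i) (abs_nonneg _)
          _ ≤ T := Finset.single_le_sum
              (fun j _ => mul_nonneg (hα j).le (abs_nonneg (qt j + xc j)))
              (Finset.mem_univ i)
      calc a * ‖qt + xc‖ ≤ a * (T / a) := mul_le_mul_of_nonneg_left hnorm ha.le
        _ = T := by field_simp
    have hts : t - s ≤ ‖qt + xc‖ := by
      have : t ≤ ‖qt + xc‖ + s := by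
        calc t = ‖(qt + xc) - xc‖ := by rw [add_sub_cancel_right]
          _ ≤ ‖qt + xc‖ + ‖xc‖ := norm_sub_le _ _
      linarith
    have hS : a * (t - s) - C ≤
        ∑ i, (α i / β i) * Real.log (Real.cosh (β i * (qt i + xc i))) := by
      have := mul_le_mul_of_nonneg_left hts ha.le
      linarith
    have hP2 : p ^ 2 ≤ Pt ⬝ᵥ Pt := normsq_le_dot Pt
    have hX2 : lam * s ^ 2 ≤ xc ⬝ᵥ Kc.mulVec xc := by
      calc lam * s ^ 2 ≤ lam * (xc ⬝ᵥ xc) :=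
            mul_le_mul_of_nonneg_left (normsq_le_dot xc) hlam.le
        _ ≤ xc ⬝ᵥ Kc.mulVec xc := hlb xc
    have htotal : a * (t - s) - C + (1/2) * p^2 + (1/2) * (lam * s^2) ≤
        (∑ i, (α i / β i) * Real.log (Real.cosh (β i * (qt i + xc i))))
          + (1/2) * (Pt ⬝ᵥ Pt) + (1/2) * (xc ⬝ᵥ Kc.mulVec xc) := by
      linarith [hS, hP2, hX2]
    exact le_trans (final_arith ha hlam ht0 hp0 hs0 hN0 htN hpN hsN hc1 hc2 hc3 hmax) htotal
end

section
/- Let n ≥ 1, let α_i > 0, β_i > 0 for i = 1,…,n, let K_c, R_c ∈ ℝ^{n×n} be positive definite, and let A, Jm : ℝ → ℝ^{n×n} be continuous with Jm(t) skew-symmetric for every t. Suppose q̃, P̃, x_c : ℝ → ℝⁿ are differentiable and satisfy, with z(t) = q̃(t) + x_c(t) and T(z) = Σ_{i=1}^n e_i α_i tanh(β_i z_i): q̃′ = A(t) P̃, P̃′ = −A(t)ᵀ T(z) + Jm(t) P̃, x_c′ = −R_c (T(z) + K_c x_c). Then the function t ↦ H̃_sat(q̃(t), P̃(t), x_c(t))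 is differentiable with derivative equal to −(T(z(t)) + K_c x_c(t))ᵀ R_c (T(z(t)) + K_c x_c(t)), which is ≤ 0. -/
open Matrix

private lemma dot_hasDerivAt {n : ℕ} {f g : ℝ → Fin n → ℝ} {f' g' : Fin n → ℝ} {t : ℝ}
    (hf : ∀ i, HasDerivAt (fun s => f s i) (f' i) t)
    (hg : ∀ i, HasDerivAt (fun s => g s i) (g' i) t) :
    HasDerivAt (fun s => f s ⬝ᵥ g s) (f' ⬝ᵥ g t + f t ⬝ᵥ g') t := by
  have h : HasDerivAt (fun s => ∑ i, f s i * g s i)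
      (∑ i, (f' i * g t i + f t i * g' i)) t :=
    HasDerivAt.fun_sum fun i _ => (hf i).mul (hg i)
  simpa [dotProduct, Finset.sum_add_distrib] using h

/-- Dissipation identity (27) in the proof of Proposition 2: along solutions of
`q̃' = A P̃`, `P̃' = -Aᵀ T(z) + Jm P̃`, `x_c' = -R_c (T(z) + K_c x_c)`
(with `z = q̃ + x_c`, `T(z)ᵢ = αᵢ tanh(βᵢ zᵢ)`, `Jm` skew-symmetric),
the saturated Lyapunov function
`H̃_sat = Σᵢ (αᵢ/βᵢ) ln(cosh(βᵢ zᵢ)) + ½ P̃ᵀ P̃ + ½ x_cᵀ K_c x_c` is differentiable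
with derivative `-(T(z) + K_c x_c)ᵀ R_c (T(z) + K_c x_c) ≤ 0`. -/
theorem saturated_closed_loop_dissipation (n : ℕ) (hn : 1 ≤ n)
    (α β : Fin n → ℝ) (hα : ∀ i, 0 < α i) (hβ : ∀ i, 0 < β i)
    (Kc Rc : Matrix (Fin n) (Fin n) ℝ) (hKc : Kc.PosDef) (hRc : Rc.PosDef)
    (A Jm : ℝ → Matrix (Fin n) (Fin n) ℝ)
    (hA : ∀ i j, Continuous fun t => A t i j)
    (hJm : ∀ i j, Continuous fun t => Jm t i j)
    (hskew : ∀ t, (Jm t)ᵀ = -(Jm t))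
    (qt Pt xc : ℝ → Fin n → ℝ)
    (T : (Fin n → ℝ) → (Fin n → ℝ))
    (hT : T = fun z i => α i * Real.tanh (β i * z i))
    (hq : ∀ t, HasDerivAt qt ((A t).mulVec (Pt t)) t)
    (hP : ∀ t, HasDerivAt Pt
      (-((A t)ᵀ.mulVec (T (qt t + xc t))) + (Jm t).mulVec (Pt t)) t)
    (hx : ∀ t, HasDerivAt xc
      (-(Rc.mulVec (T (qt t + xc t) + Kc.mulVec (xc t)))) t) :
    ∀ t : ℝ,
      HasDerivAt
        (fun s => (∑ i, (α i / β i) *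
            Real.log (Real.cosh (β i * (qt s i + xc s i))))
          + (1/2) * (Pt s ⬝ᵥ Pt s) + (1/2) * (xc s ⬝ᵥ Kc.mulVec (xc s)))
        (-((T (qt t + xc t) + Kc.mulVec (xc t)) ⬝ᵥ
            Rc.mulVec (T (qt t + xc t) + Kc.mulVec (xc t)))) t ∧
      -((T (qt t + xc t) + Kc.mulVec (xc t)) ⬝ᵥ
          Rc.mulVec (T (qt t + xc t) + Kc.mulVec (xc t))) ≤ 0 := by
  intro t
  -- abbreviations at time t
  set z : Fin n → ℝ := qt t + xc t with hz
  set w : Fin n → ℝ := T z + Kc.mulVec (xc t) with hw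
  set q' : Fin n → ℝ := (A t).mulVec (Pt t) with hq'
  set P' : Fin n → ℝ := -((A t)ᵀ.mulVec (T z)) + (Jm t).mulVec (Pt t) with hP'
  set x' : Fin n → ℝ := -(Rc.mulVec w) with hx'
  have hqi : ∀ i, HasDerivAt (fun s => qt s i) (q' i) t := hasDerivAt_pi.mp (hq t)
  have hPi : ∀ i, HasDerivAt (fun s => Pt s i) (P' i) t := hasDerivAt_pi.mp (hP t)
  have hxi : ∀ i, HasDerivAt (fun s => xc s i) (x' i) t := hasDerivAt_pi.mp (hx t)
  -- derivative of each logarithmic summand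
  have hterm : ∀ i : Fin n, HasDerivAt
      (fun s => (α i / β i) * Real.log (Real.cosh (β i * (qt s i + xc s i))))
      (T z i * (q' i + x' i)) t := by
    intro i
    have hu : HasDerivAt (fun s => β i * (qt s i + xc s i))
        (β i * (q' i + x' i)) t := ((hqi i).add (hxi i)).const_mul (β i)
    have hcosh : HasDerivAt (fun s => Real.cosh (β i * (qt s i + xc s i)))
        (Real.sinh (β i * (qt t i + xc t i)) * (β i * (q' i + x' i))) t :=
      (Real.hasDerivAt_cosh _).comp t hu
    have hlog := (hcosh.log (Real.cosh_pos _).ne')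
    have := hlog.const_mul (α i / β i)
    refine this.congr_deriv ?_
    have hc : Real.cosh (β i * (qt t i + xc t i)) ≠ 0 := (Real.cosh_pos _).ne'
    have hb : (β i) ≠ 0 := (hβ i).ne'
    simp only [hT, hz, Pi.add_apply, Real.tanh_eq_sinh_div_cosh]
    field_simp
  have h1 : HasDerivAt
      (fun s => ∑ i, (α i / β i) * Real.log (Real.cosh (β i * (qt s i + xc s i))))
      (T z ⬝ᵥ (q' + x')) t := by
    have := HasDerivAt.fun_sum (fun i (_ : i ∈ Finset.univ) => hterm i)
    simpa [dotProduct] using this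
  have h2 : HasDerivAt (fun s => (1/2 : ℝ) * (Pt s ⬝ᵥ Pt s))
      ((1/2 : ℝ) * (P' ⬝ᵥ Pt t + Pt t ⬝ᵥ P')) t :=
    (dot_hasDerivAt hPi hPi).const_mul _
  have h3 : HasDerivAt (fun s => (1/2 : ℝ) * (xc s ⬝ᵥ Kc.mulVec (xc s)))
      ((1/2 : ℝ) * (x' ⬝ᵥ Kc.mulVec (xc t) + xc t ⬝ᵥ Kc.mulVec x')) t := by
    have hKx : ∀ i, HasDerivAt (fun s => Kc.mulVec (xc s) i) (Kc.mulVec x' i) t := by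
      intro i
      have : HasDerivAt (fun s => ∑ j, Kc i j * xc s j) (∑ j, Kc i j * x' j) t :=
        HasDerivAt.fun_sum fun j _ => (hxi j).const_mul _
      simpa [Matrix.mulVec, dotProduct] using this
    exact (dot_hasDerivAt hxi hKx).const_mul _
  have hD := (h1.add h2).add h3
  -- the computed derivative equals the claimed one
  have key : T z ⬝ᵥ (q' + x') + (1/2 : ℝ) * (P' ⬝ᵥ Pt t + Pt t ⬝ᵥ P')
      + (1/2 : ℝ) * (x' ⬝ᵥ Kc.mulVec (xc t) + xc t ⬝ᵥ Kc.mulVec x')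
      = -(w ⬝ᵥ Rc.mulVec w) := by
    have hskew0 : Pt t ⬝ᵥ (Jm t).mulVec (Pt t) = 0 := by
      have h1 : Pt t ⬝ᵥ (Jm t).mulVec (Pt t) = ((Jm t)ᵀ.mulVec (Pt t)) ⬝ᵥ Pt t := by
        rw [dotProduct_mulVec, mulVec_transpose]
      rw [hskew t, Matrix.neg_mulVec, neg_dotProduct,
        dotProduct_comm] at h1
      have h2 := dotProduct_comm ((Jm t).mulVec (Pt t)) (Pt t)
      linarith
    have hA1 : Pt t ⬝ᵥ (A t)ᵀ.mulVec (T z) = T z ⬝ᵥ q' := by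
      rw [hq', dotProduct_mulVec, vecMul_transpose, dotProduct_comm]
    have hKsym : Kcᵀ = Kc := by
      have := hKc.1
      simpa [Matrix.IsHermitian, Matrix.conjTranspose_eq_transpose_of_trivial] using this
    have hKc1 : xc t ⬝ᵥ Kc.mulVec x' = x' ⬝ᵥ Kc.mulVec (xc t) := by
      have h1 : x' ⬝ᵥ Kc.mulVec (xc t) = ((Kcᵀ).mulVec x') ⬝ᵥ xc t := by
        rw [dotProduct_mulVec, mulVec_transpose]
      rw [hKsym] at h1
      rw [h1, dotProduct_comm, dotProduct_comm (Kc.mulVec x')]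
    have hPP : Pt t ⬝ᵥ P' = -(T z ⬝ᵥ q') := by
      rw [hP', dotProduct_add, dotProduct_neg, hA1, hskew0, add_zero]
    have hPP' : P' ⬝ᵥ Pt t = -(T z ⬝ᵥ q') := by
      rw [dotProduct_comm]; exact hPP
    have hTx : T z ⬝ᵥ (q' + x') = T z ⬝ᵥ q' + T z ⬝ᵥ x' := dotProduct_add _ _ _
    have hxw : x' ⬝ᵥ Kc.mulVec (xc t) = (Kc.mulVec (xc t)) ⬝ᵥ x' := dotProduct_comm _ _
    have hfin : T z ⬝ᵥ x' + (Kc.mulVec (xc t)) ⬝ᵥ x' = w ⬝ᵥ x' := (add_dotProduct _ _ _).symm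
    have hwx : w ⬝ᵥ x' = -(w ⬝ᵥ Rc.mulVec w) := by
      rw [hx', dotProduct_neg]
    rw [hTx, hPP, hPP', hKc1, hxw]
    linarith [hfin, hwx]
  refine ⟨key ▸ hD, ?_⟩
  have := hRc.posSemidef.re_dotProduct_nonneg w
  simp only [RCLike.re_to_real, star_trivial] at this
  linarith
end

section
/- Let n ≥ 1, let Ψ : ℝⁿ → ℝ^{n×n} and J : ℝⁿ × ℝⁿ → ℝ^{n×n} be continuous, and let V : ℝⁿ → ℝ be continuously differentiable with gradient ∇V. Suppose q, P : ℝ → ℝⁿ are differentiable and satisfy the transformed system q′ = Ψ(q) P and P′ = −Ψ(q)ᵀ ∇V(q) + J(q, P) P + Ψ(q)ᵀ u(t), and suppose q_d, P_d : ℝ → ℝⁿ are differentiable and satisfy the desired dynamics q_d′ = Ψ(q) P_d and P_d′ = −Ψ(q)ᵀ ∇V(q_d) + J(q, P) P_d + Ψ(q)ᵀ u_d(t). If the input is chosen as u(t) = u_d(t) + ∇V(q(t)) − ∇V(q_d(t)) + û(t), then the errors q̃ = q − q_d and P̃ = P − P_d satisfy q̃′ = Ψ(q) P̃ and P̃′ =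 Ψ(q)ᵀ û(t) + J(q, P) P̃. -/
open Matrix

/-- Reduction of tracking to stabilization (equations (13)–(16)): if the system
satisfies `q' = Ψ(q) P`, `P' = -Ψ(q)ᵀ ∇V(q) + J(q,P) P + Ψ(q)ᵀ u` and the desired
trajectory satisfies `q_d' = Ψ(q) P_d`, `P_d' = -Ψ(q)ᵀ ∇V(q_d) + J(q,P) P_d + Ψ(q)ᵀ u_d`,
and `u = u_d + ∇V(q) - ∇V(q_d) + û`, then the errors `q̃ = q - q_d`, `P̃ = P - P_d`
satisfy `q̃' = Ψ(q) P̃` and `P̃' = Ψ(q)ᵀ û + J(q,P) P̃`. -/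
theorem error_dynamics_pH (n : ℕ) (hn : 1 ≤ n)
    (Ψ : (Fin n → ℝ) → Matrix (Fin n) (Fin n) ℝ)
    (hΨ : ∀ i j, Continuous fun q => Ψ q i j)
    (J : (Fin n → ℝ) → (Fin n → ℝ) → Matrix (Fin n) (Fin n) ℝ)
    (hJ : ∀ i j, Continuous fun v : (Fin n → ℝ) × (Fin n → ℝ) => J v.1 v.2 i j)
    (V : (Fin n → ℝ) → ℝ) (hV : ContDiff ℝ 1 V)
    (gradV : (Fin n → ℝ) → (Fin n → ℝ))
    (hgradV : ∀ x v : Fin n → ℝ, fderiv ℝ V x v = gradV x ⬝ᵥ v)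
    (u ud uhat : ℝ → Fin n → ℝ)
    (q P qd Pd : ℝ → Fin n → ℝ)
    (hq : ∀ t, HasDerivAt q ((Ψ (q t)).mulVec (P t)) t)
    (hP : ∀ t, HasDerivAt P
      (-((Ψ (q t))ᵀ.mulVec (gradV (q t))) + (J (q t) (P t)).mulVec (P t)
        + (Ψ (q t))ᵀ.mulVec (u t)) t)
    (hqd : ∀ t, HasDerivAt qd ((Ψ (q t)).mulVec (Pd t)) t)
    (hPd : ∀ t, HasDerivAt Pd
      (-((Ψ (q t))ᵀ.mulVec (gradV (qd t))) + (J (q t) (P t)).mulVec (Pd t)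
        + (Ψ (q t))ᵀ.mulVec (ud t)) t)
    (hu : ∀ t, u t = ud t + gradV (q t) - gradV (qd t) + uhat t) :
    (∀ t, HasDerivAt (fun s => q s - qd s)
        ((Ψ (q t)).mulVec (P t - Pd t)) t) ∧
    (∀ t, HasDerivAt (fun s => P s - Pd s)
        ((Ψ (q t))ᵀ.mulVec (uhat t) + (J (q t) (P t)).mulVec (P t - Pd t)) t) := by
  constructor
  · intro t
    have := (hq t).sub (hqd t)
    rw [Matrix.mulVec_sub]; exact this
  · intro t
    have h := (hP t).sub (hPd t)
    have : -((Ψ (q t))ᵀ.mulVec (gradV (q t))) + (J (q t) (P t)).mulVec (P t)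
        + (Ψ (q t))ᵀ.mulVec (u t)
        - (-((Ψ (q t))ᵀ.mulVec (gradV (qd t))) + (J (q t) (P t)).mulVec (Pd t)
        + (Ψ (q t))ᵀ.mulVec (ud t))
        = (Ψ (q t))ᵀ.mulVec (uhat t) + (J (q t) (P t)).mulVec (P t - Pd t) := by
      rw [hu t]
      simp only [Matrix.mulVec_sub, Matrix.mulVec_add]
      abel
    rwa [this] at h
end
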